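/- arXiv:2406.16887 — 7 statements merged into one kernel-verified Lean document; each statement's English description precedes it below -/
import Mathlib

section
/- Let Z : G × G → A_X be a cotranslation and γ : G → A_X a group homomorphism such that γ(k) ∘ Z(g, h) = Z(g, h) ∘ γ(k) for all g, h, k ∈ G. Then W(g, h) := Z(g, h) ∘ γ(h) is also a cotranslation. -/
/-- If `Z` is a cotranslation and `γ` a commuting group morphism, then
`W(g,h) := Z(g,h) ∘ γ(h)` is a cotranslation. -/
theorem stmt_2 {G X : Type*} [Group G] (Z : G → G → Equiv.Perm X)
    (hZ : ∀ g h k : G, Z g (k * h) = Z (h * g) k * Z g h)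
    (γ : G →* Equiv.Perm X)
    (hcomm : ∀ g h k : G, γ k * Z g h = Z g h * γ k) :
    ∀ g h k : G, Z g (k * h) * γ (k * h) = (Z (h * g) k * γ k) * (Z g h * γ h) := by
  intro g h k
  rw [hZ, map_mul, mul_assoc, mul_assoc, ← mul_assoc (Z g h), ← hcomm, mul_assoc]
end

section
/- There is a bijective correspondence between cotranslations Z : G × G → A_X and group homomorphisms W : G → A_{G × X} satisfying π_G(W(g)(h, x)) = g*h for all h ∈ G, x ∈ X, given by W(g)(h, x) = (g*h, Z(h, g)(x)); i.e., W defined from a cotranslation Z in this way is a group homomorphism, and conversely for any such group homomorphism W, the map Z(h, g)(x) := π_X(W(g)(h, x)) is a cotranslation. -/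
/-- Correspondence between cotranslations `Z : G × G → A_X` and group morphisms
`W : G → A_{G×X}` with `π_G (W g (h,x)) = g*h`, via `W g (h,x) = (g*h, Z h g x)`. -/
theorem stmt_5 {G X : Type*} [Group G] :
    (∀ Z : G → G → Equiv.Perm X,
      (∀ h g₁ g₂ : G, Z (g₁ * h) g₂ * Z h g₁ = Z h (g₂ * g₁)) →
      ∃ W : G →* Equiv.Perm (G × X),
        (∀ (g h : G) (x : X), ((W g) (h, x)).1 = g * h) ∧
        (∀ (g h : G) (x : X), (W g) (h, x) = (g * h, (Z h g) x))) ∧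
    (∀ W : G →* Equiv.Perm (G × X),
      (∀ (g h : G) (x : X), ((W g) (h, x)).1 = g * h) →
      ∀ Z : G → G → X → X,
        (∀ (h g : G) (x : X), Z h g x = ((W g) (h, x)).2) →
        ∀ (h g₁ g₂ : G) (x : X), Z (g₁ * h) g₂ (Z h g₁ x) = Z h (g₂ * g₁) x) := by
  constructor
  · intro Z hZ
    let W₀ : G → Equiv.Perm (G × X) := fun g =>
      { toFun := fun p => (g * p.1, Z p.1 g p.2)
        invFun := fun p => (g⁻¹ * p.1, (Z (g⁻¹ * p.1) g).symm p.2)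
        left_inv := by intro p; simp
        right_inv := by intro p; simp }
    refine ⟨MonoidHom.mk' W₀ ?_, ?_, ?_⟩
    · intro a b
      ext p
      · simp [W₀, mul_assoc]
      · have := hZ p.1 b a
        simp only [W₀, Equiv.Perm.coe_mul, Function.comp] at *
        simp only [Equiv.coe_fn_mk]
        rw [← this]
        simp [mul_assoc]
    · intro g h x; rfl
    · intro g h x; rfl
  · intro W hW Z hZdef h g₁ g₂ x
    have key : (W g₁) (h, x) = (g₁ * h, ((W g₁) (h, x)).2) := by
      ext
      · exact hW g₁ h x
      · rfl
    calc Z (g₁ * h) g₂ (Z h g₁ x)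
        = ((W g₂) (g₁ * h, ((W g₁) (h, x)).2)).2 := by rw [hZdef, hZdef]
      _ = ((W g₂) ((W g₁) (h, x))).2 := by rw [← key]
      _ = ((W (g₂ * g₁)) (h, x)).2 := by rw [map_mul]; rfl
      _ = Z h (g₂ * g₁) x := (hZdef h (g₂ * g₁) x).symm
end

section
/- Every cotranslation Z : ℤ × ℤ → A_X arises from a unique map A : ℤ → A_X via A(n) = Z(n, 1); that is, the correspondence between maps A : ℤ → A_X and cotranslations Z : ℤ × ℤ → A_X given by products of the A(n) is bijective. -/
/-- The ordered product `A(n + m - 1) ∘ ⋯ ∘ A(n)` of `m` factors. -/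
noncomputable def prodA8 {X : Type*} [AddCommGroup X] [Module ℝ X]
    (A : ℤ → (X ≃ₗ[ℝ] X)) (n : ℤ) : ℕ → (X ≃ₗ[ℝ] X)
  | 0 => 1
  | (k + 1) => A (n + k) * prodA8 A n k

/-- The candidate cotranslation built from `A : ℤ → A_X` via the product formula. -/
noncomputable def Zof8 {X : Type*} [AddCommGroup X] [Module ℝ X]
    (A : ℤ → (X ≃ₗ[ℝ] X)) (n m : ℤ) : (X ≃ₗ[ℝ] X) :=
  if 0 ≤ m then prodA8 A n m.toNat else (prodA8 A (n + m) (-m).toNat)⁻¹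

def IsCotranslation {G : Type*} [Mul G] (Z : ℤ → ℤ → G) : Prop :=
  ∀ n m p : ℤ, Z n (p + m) = Z (m + n) p * Z n m

namespace IsCotranslation

section Group

variable {G : Type*} [Group G] {Z : ℤ → ℤ → G}

theorem apply_zero (hZ : IsCotranslation Z) (n : ℤ) : Z n 0 = 1 := by
  have h := hZ n 0 0
  rw [add_zero, zero_add] at h
  exact mul_eq_right.mp h.symm

theorem apply_eq_inv (hZ : IsCotranslation Z) (n m : ℤ) : Z n m = (Z (m + n) (-m))⁻¹ := by
  have h := hZ n m (-m)
  rw [neg_add_cancel, hZ.apply_zero] at h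
  exact eq_inv_of_mul_eq_one_right h.symm

end Group

variable {X : Type*} [AddCommGroup X] [Module ℝ X] {Z : ℤ → ℤ → (X ≃ₗ[ℝ] X)}

theorem apply_natCast (hZ : IsCotranslation Z) (k : ℕ) (n : ℤ) :
    Z n k = prodA8 (fun n => Z n 1) n k := by
  induction k with
  | zero => exact hZ.apply_zero n
  | succ k ih =>
    rw [Nat.cast_succ, add_comm, hZ n k 1, ih, prodA8, add_comm (k : ℤ) n]

theorem eq_Zof8 (hZ : IsCotranslation Z) : Z = Zof8 (fun n => Z n 1) := by
  funext n m
  unfold Zof8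
  split_ifs with hm
  · rw [← hZ.apply_natCast, Int.toNat_of_nonneg hm]
  · rw [← hZ.apply_natCast, Int.toNat_of_nonneg (by omega), hZ.apply_eq_inv, add_comm m n]

end IsCotranslation

/-- Every cotranslation `Z : ℤ × ℤ → A_X` arises, via the product formula,
from a unique map `A : ℤ → A_X`, namely `A n = Z n 1`. -/
theorem stmt_8 {X : Type*} [AddCommGroup X] [Module ℝ X]
    (Z : ℤ → ℤ → (X ≃ₗ[ℝ] X))
    (hZ : ∀ n m p : ℤ, Z n (p + m) = Z (m + n) p * Z n m) :
    ∃! A : ℤ → (X ≃ₗ[ℝ] X), (∀ n : ℤ, A n = Z n 1) ∧ Z = Zof8 A :=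
  ⟨fun n => Z n 1, ⟨fun _ => rfl, IsCotranslation.eq_Zof8 hZ⟩,
    fun _ ⟨hA, _⟩ => funext hA⟩
end

section
/- Let Z : 𝕂 × 𝕂 → A_X be a continuous cotranslation such that for every r ∈ 𝕂 the map t ↦ Z(r, t) is differentiable at t = 0. Then for every r, t ∈ 𝕂 the map t ↦ Z(r, t) is differentiable and ∂₂Z(r, t) = ∂₂Z(r + t, 0) ∘ Z(r, t). -/
/-! Fixing `r` and `t`, the cotranslation identity writes `s ↦ Z(r, s)` as the right
translate `s ↦ Z(r + t, s - t) ∘ Z(r, t)`, so differentiability at `0` of the second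
argument transfers to every point `t`, and the chain and product rules give the
derivative. -/

theorem hasDerivAt_of_eq_comp_sub_mul {𝕜 R : Type*} [NontriviallyNormedField 𝕜]
    [NormedRing R] [NormedAlgebra 𝕜 R] {f g : 𝕜 → R} {D c : R} {t : 𝕜}
    (hf : ∀ s, f s = g (s - t) * c) (hg : HasDerivAt g D 0) :
    HasDerivAt f (D * c) t := by
  have hshift : HasDerivAt (fun s => g (s - t)) D t :=
    (sub_self t ▸ hg).comp_sub_const t t
  simpa only [← funext hf] using hshift.mul_const c

theorem cotranslation_coe_eq_mul {G R M : Type*} [AddCommGroup G] [Semiring R]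
    [TopologicalSpace M] [AddCommMonoid M] [Module R M] {Z : G → G → (M ≃L[R] M)}
    (hZ : ∀ r s t : G, Z r (t + s) = Z (s + r) t * Z r s) (r t s : G) :
    (Z r s : M →L[R] M) = (Z (r + t) (s - t) : M →L[R] M) * (Z r t : M →L[R] M) := by
  rw [add_comm r t, ← sub_add_cancel s t, hZ r t (s - t), add_sub_cancel_right]
  rfl

theorem stmt_10_general {𝕂 X : Type*} [RCLike 𝕂] [NormedAddCommGroup X] [NormedSpace 𝕂 X]
    (Z : 𝕂 → 𝕂 → (X ≃L[𝕂] X))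
    (hZ : ∀ r s t : 𝕂, Z r (t + s) = Z (s + r) t * Z r s)
    (D₀ : 𝕂 → (X →L[𝕂] X))
    (hD₀ : ∀ r : 𝕂, HasDerivAt (fun t => ((Z r t : X →L[𝕂] X))) (D₀ r) 0) :
    ∀ r t : 𝕂, HasDerivAt (fun s => ((Z r s : X →L[𝕂] X)))
      ((D₀ (r + t)).comp ((Z r t : X →L[𝕂] X))) t := fun r t =>
  hasDerivAt_of_eq_comp_sub_mul (cotranslation_coe_eq_mul hZ r t) (hD₀ (r + t))

/-- If a continuous cotranslation `Z` is differentiable in the second argument at `0`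
(with derivative `D₀ r` there), then `t ↦ Z(r,t)` is differentiable everywhere and
`∂₂Z(r,t) = ∂₂Z(r+t,0) ∘ Z(r,t)`. -/
theorem stmt_10 {𝕂 X : Type*} [RCLike 𝕂] [NormedAddCommGroup X] [NormedSpace 𝕂 X]
    (Z : 𝕂 → 𝕂 → (X ≃L[𝕂] X))
    (hZ : ∀ r s t : 𝕂, Z r (t + s) = Z (s + r) t * Z r s)
    (hcont : Continuous fun p : 𝕂 × 𝕂 => ((Z p.1 p.2 : X →L[𝕂] X)))
    (D₀ : 𝕂 → (X →L[𝕂] X))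
    (hD₀ : ∀ r : 𝕂, HasDerivAt (fun t => ((Z r t : X →L[𝕂] X))) (D₀ r) 0) :
    ∀ r t : 𝕂, HasDerivAt (fun s => ((Z r s : X →L[𝕂] X)))
      ((D₀ (r + t)).comp ((Z r t : X →L[𝕂] X))) t :=
  stmt_10_general Z hZ D₀ hD₀
end

section
/- Let W : G × G → B_X be a partial cotranslation. Then for all g, h, k ∈ G, ker W(h, g) = ker W(h, k). -/
/-- For a partial cotranslation `W`, the kernels `ker W(h, g)` do not depend on `g`. -/
theorem stmt_14 {G K X : Type*} [Group G] [Field K] [AddCommGroup X] [Module K X]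
    (W : G → G → Module.End K X)
    (hW : ∀ g h k : G, W g (k * h) = W (h * g) k * W g h) :
    ∀ h g k : G, LinearMap.ker (W h g) = LinearMap.ker (W h k) := by
  have key : ∀ h a b : G, LinearMap.ker (W h a) ≤ LinearMap.ker (W h b) := by
    intro h a b x hx
    rw [LinearMap.mem_ker] at hx ⊢
    have := hW h a (b * a⁻¹)
    rw [inv_mul_cancel_right] at this
    rw [this]
    simp [Module.End.mul_apply, hx]
  intro h g k
  exact le_antisymm (key h g k) (key h k g)
end

section
/- Let W : G × G → B_X be a partial cotranslation on a finite-dimensional vector space X. Then rank W(g, h) = rank W(k, ℓ) for all g, h, k, ℓ ∈ G. -/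
/-- For a partial cotranslation `W` on a finite-dimensional space,
all the operators `W(g, h)` have the same rank. -/
theorem stmt_15 {G K X : Type*} [Group G] [Field K] [AddCommGroup X] [Module K X]
    [FiniteDimensional K X]
    (W : G → G → Module.End K X)
    (hW : ∀ g h k : G, W g (k * h) = W (h * g) k * W g h) :
    ∀ g h k l : G, LinearMap.rank (W g h) = LinearMap.rank (W k l) := by
  -- key decomposition: W g h = W (b*g) (h*b⁻¹) * W g b
  have key : ∀ g h b : G, W g h = W (b * g) (h * b⁻¹) * W g b := by
    intro g h b
    have := hW g b (h * b⁻¹)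
    simpa using this
  -- rank (W g h) ≤ rank (W g b) for any b
  have hA : ∀ g h b : G, LinearMap.rank (W g h) ≤ LinearMap.rank (W g b) := by
    intro g h b
    rw [key g h b]
    exact LinearMap.rank_comp_le_right _ _
  -- rank (W g h) ≤ rank (W (b*g) (h*b⁻¹)) for any b
  have hB : ∀ g h b : G, LinearMap.rank (W g h) ≤
      LinearMap.rank (W (b * g) (h * b⁻¹)) := by
    intro g h b
    rw [key g h b]
    exact LinearMap.rank_comp_le_left _ _
  have hle : ∀ g h k l : G, LinearMap.rank (W g h) ≤ LinearMap.rank (W k l) := by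
    intro g h k l
    calc LinearMap.rank (W g h)
        ≤ LinearMap.rank (W ((k * g⁻¹) * g) (h * (k * g⁻¹)⁻¹)) := hB g h (k * g⁻¹)
      _ = LinearMap.rank (W k (h * (k * g⁻¹)⁻¹)) := by group
      _ ≤ LinearMap.rank (W k l) := hA _ _ _
  intro g h k l
  exact le_antisymm (hle g h k l) (hle k l g h)
end

section
/- Let P : G → M_d(𝕂) be a projector-valued map (P(g)² = P(g)) of constant rank n such that sup_{g ∈ G} max(‖P(g)‖, ‖Id − P(g)‖) < M for some M ≥ 1. Then there exists T : G → GL_d(𝕂) with T(g)⁻¹ P(g) T(g) equal to the block diagonal matrix diag(Id_n, 0) for all g, and sup_{g ∈ G} max(‖T(g)‖, ‖T(g)⁻¹‖) < ∞ (explicitly, ‖T(g)‖ ≤ d and ‖T(g)⁻¹‖ ≤ dM). -/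
/-!
Take an orthonormal basis of `range P(g)` and one of `ker P(g)`, and let `T(g)` be the matrix
whose columns are these `d` unit vectors. Then `T(g)⁻¹ P(g) T(g) = diag(Id_n, 0)`, and every column
of `T(g)` is a unit vector, so `‖T(g)‖ ≤ √d`. A vector `x` splits as `P(g) x + (1 - P(g)) x`, and
its coordinates in the new basis are the coefficients of these two pieces in the two orthonormal
bases, each bounded by `M ‖x‖`; hence `‖T(g)⁻¹‖ ≤ √d M`.
-/

open scoped Matrix.Norms.L2Operator

section

open Matrix Module WithLp

variable {𝕂 : Type*} [RCLike 𝕂]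

theorem IsIdempotentElem.exists_orthonormal_range_ker {E : Type*} [NormedAddCommGroup E]
    [InnerProductSpace 𝕂 E] [FiniteDimensional 𝕂 E] {f : E →ₗ[𝕂] E} (hf : IsIdempotentElem f)
    {n k : ℕ} (hn : finrank 𝕂 (LinearMap.range f) = n) (hk : finrank 𝕂 (LinearMap.ker f) = k) :
    ∃ (v : Fin n → E) (w : Fin k → E), Orthonormal 𝕂 v ∧ Orthonormal 𝕂 w ∧
      (∀ a, f (v a) = v a) ∧ ∀ b, f (w b) = 0 := by
  let bV := (stdOrthonormalBasis 𝕂 (LinearMap.range f)).reindex (finCongr hn)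
  let bW := (stdOrthonormalBasis 𝕂 (LinearMap.ker f)).reindex (finCongr hk)
  refine ⟨fun a => bV a, fun b => bW b, bV.orthonormal.comp_linearIsometry (Submodule.subtypeₗᵢ _),
    bW.orthonormal.comp_linearIsometry (Submodule.subtypeₗᵢ _), fun a => ?_, fun b => (bW b).2⟩
  exact (LinearMap.IsIdempotentElem.mem_range_iff hf).mp (bV a).2

namespace Matrix

theorem l2_opNorm_le_of_norm_mulVec_apply_le {m n : Type*} [Fintype m] [Fintype n]
    [DecidableEq n] (A : Matrix m n 𝕂) {C : ℝ} (hC : 0 ≤ C)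
    (h : ∀ (x : EuclideanSpace 𝕂 n) (i : m), ‖(A *ᵥ ofLp x) i‖ ≤ C * ‖x‖) :
    ‖A‖ ≤ √(Fintype.card m) * C := by
  rw [l2_opNorm_def]
  refine ContinuousLinearMap.opNorm_le_bound _ (by positivity) fun x => ?_
  refine (sq_le_sq₀ (norm_nonneg _) (by positivity)).mp ?_
  calc _ = ∑ i, ‖(A *ᵥ ofLp x) i‖ ^ 2 := EuclideanSpace.norm_sq_eq _
    _ ≤ ∑ _i : m, (C * ‖x‖) ^ 2 :=
        Finset.sum_le_sum fun i _ => pow_le_pow_left₀ (norm_nonneg _) (h x i) 2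
    _ = (√(Fintype.card m) * C * ‖x‖) ^ 2 := by
        simp only [Finset.sum_const, Finset.card_univ, nsmul_eq_mul]
        rw [mul_pow, mul_pow, mul_pow, Real.sq_sqrt (Nat.cast_nonneg _)]
        ring

variable {ι : Type*}

section ofCols

variable [Fintype ι]

def ofCols (u : ι → EuclideanSpace 𝕂 ι) : Matrix ι ι 𝕂 := of fun i j => u j i

theorem conjTranspose_ofCols_mulVec_apply (u : ι → EuclideanSpace 𝕂 ι) (x : ι → 𝕂) (i : ι) :
    ((ofCols u)ᴴ *ᵥ x) i = inner 𝕂 (u i) (toLp 2 x) := by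
  simp [ofCols, mulVec, dotProduct, EuclideanSpace.inner_eq_star_dotProduct, mul_comm]

theorem conjTranspose_ofCols_mul_ofCols_apply (u : ι → EuclideanSpace 𝕂 ι) (i j : ι) :
    ((ofCols u)ᴴ * ofCols u) i j = inner 𝕂 (u i) (u j) := by
  simp [ofCols, mul_apply, EuclideanSpace.inner_eq_star_dotProduct, dotProduct, mul_comm]

theorem l2_opNorm_ofCols_le [DecidableEq ι] {u : ι → EuclideanSpace 𝕂 ι} (hu : ∀ i, ‖u i‖ ≤ 1) :
    ‖ofCols u‖ ≤ √(Fintype.card ι) := by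
  rw [← l2_opNorm_conjTranspose, ← mul_one √_]
  refine l2_opNorm_le_of_norm_mulVec_apply_le _ zero_le_one fun x i => ?_
  rw [conjTranspose_ofCols_mulVec_apply, one_mul]
  exact (norm_inner_le_norm _ _).trans (mul_le_of_le_one_left (norm_nonneg _) (hu i))

end ofCols

section diagonalIndicator

variable [DecidableEq ι]

def diagonalIndicator (p : ι → Prop) [DecidablePred p] : Matrix ι ι 𝕂 :=
  diagonal fun i => if p i then 1 else 0

theorem one_sub_diagonalIndicator (p : ι → Prop) [DecidablePred p] :
    1 - diagonalIndicator p = (diagonalIndicator (fun i => ¬p i) : Matrix ι ι 𝕂) := by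
  ext i j
  by_cases hp : p i <;> simp [diagonalIndicator, one_apply, diagonal_apply, hp]

theorem diagonalIndicator_eq_of (p : ι → Prop) [DecidablePred p] :
    (diagonalIndicator p : Matrix ι ι 𝕂) = of fun i j => if i = j ∧ p i then 1 else 0 := by
  ext i j
  by_cases h : i = j <;> simp [diagonalIndicator, h]

end diagonalIndicator

variable [Fintype ι] [DecidableEq ι]

/-- `u` lists an orthonormal basis of `range A` (the indices satisfying `p`) and one of `ker A`. -/
structure IsAdaptedFrame (A : Matrix ι ι 𝕂) (p : ι → Prop) [DecidablePred p]
    (u : ι → EuclideanSpace 𝕂 ι) : Prop where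
  mulVec_eq : ∀ j, A *ᵥ ofLp (u j) = if p j then ofLp (u j) else 0
  inner_eq : ∀ i j, (p i ↔ p j) → inner 𝕂 (u i) (u j) = if i = j then 1 else 0

/-- Row `i` is `x ↦ ⟪u i, A x⟫` or `x ↦ ⟪u i, (1 - A) x⟫`: the coefficient of `u i` in the
orthonormal expansion of the range or kernel component of `x`. -/
def adaptedFrameInv (A : Matrix ι ι 𝕂) (p : ι → Prop) [DecidablePred p]
    (u : ι → EuclideanSpace 𝕂 ι) : Matrix ι ι 𝕂 :=
  diagonalIndicator p * (ofCols u)ᴴ * A + diagonalIndicator (fun i => ¬p i) * (ofCols u)ᴴ * (1 - A)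

namespace IsAdaptedFrame

variable {A : Matrix ι ι 𝕂} {p : ι → Prop} [DecidablePred p] {u : ι → EuclideanSpace 𝕂 ι}

theorem norm_eq_one (hu : IsAdaptedFrame A p u) (i : ι) : ‖u i‖ = 1 := by
  have h := hu.inner_eq i i Iff.rfl
  rw [if_pos rfl, inner_self_eq_norm_sq_to_K] at h
  exact (pow_eq_one_iff_of_nonneg (norm_nonneg _) two_ne_zero).mp (by exact_mod_cast h)

theorem mul_ofCols (hu : IsAdaptedFrame A p u) :
    A * ofCols u = ofCols u * diagonalIndicator p := by
  ext i j
  have h := congrFun (hu.mulVec_eq j) i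
  simp only [diagonalIndicator, mul_diagonal]
  by_cases hj : p j <;> simp_all [ofCols, mul_apply, mulVec, dotProduct]

theorem one_sub_mul_ofCols (hu : IsAdaptedFrame A p u) :
    (1 - A) * ofCols u = ofCols u * diagonalIndicator (fun i => ¬p i) := by
  rw [sub_mul, hu.mul_ofCols, one_mul, ← one_sub_diagonalIndicator, mul_sub, mul_one]

theorem adaptedFrameInv_mul_ofCols (hu : IsAdaptedFrame A p u) :
    adaptedFrameInv A p u * ofCols u = 1 := by
  simp only [adaptedFrameInv, add_mul, mul_assoc, hu.mul_ofCols, hu.one_sub_mul_ofCols]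
  ext i j
  simp only [← mul_assoc (ofCols u)ᴴ, diagonalIndicator, diagonal_mul, mul_diagonal, add_apply,
    conjTranspose_ofCols_mul_ofCols_apply]
  rcases eq_or_ne i j with rfl | hne
  · by_cases hi : p i <;> simp [hi, hu.norm_eq_one i]
  · by_cases hi : p i <;> by_cases hj : p j <;> simp [hi, hj, hne, hu.inner_eq i j]

theorem l2_opNorm_adaptedFrameInv_le (hu : IsAdaptedFrame A p u) {M : ℝ} (hAM : ‖A‖ ≤ M)
    (hAM' : ‖1 - A‖ ≤ M) : ‖adaptedFrameInv A p u‖ ≤ √(Fintype.card ι) * M := by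
  have hcoord (B : Matrix ι ι 𝕂) (hB : ‖B‖ ≤ M) (x : EuclideanSpace 𝕂 ι) (i : ι) :
      ‖((ofCols u)ᴴ *ᵥ (B *ᵥ ofLp x)) i‖ ≤ M * ‖x‖ := by
    rw [conjTranspose_ofCols_mulVec_apply]
    calc _ ≤ ‖u i‖ * ‖toLp 2 (B *ᵥ ofLp x)‖ := norm_inner_le_norm _ _
      _ ≤ ‖B‖ * ‖x‖ := by rw [hu.norm_eq_one, one_mul]; exact l2_opNorm_mulVec B x
      _ ≤ M * ‖x‖ := by gcongr
  refine l2_opNorm_le_of_norm_mulVec_apply_le _ ((norm_nonneg _).trans hAM) fun x i => ?_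
  simp only [adaptedFrameInv, add_mulVec, ← mulVec_mulVec, diagonalIndicator, Pi.add_apply,
    mulVec_diagonal]
  by_cases hi : p i
  · simpa [hi] using hcoord A hAM x i
  · simpa [hi] using hcoord (1 - A) hAM' x i

end IsAdaptedFrame

theorem exists_isAdaptedFrame {d n : ℕ} (A : Matrix (Fin d) (Fin d) 𝕂) (hA : IsIdempotentElem A)
    (hrank : A.rank = n) : ∃ u, IsAdaptedFrame A (fun i : Fin d => (i : ℕ) < n) u := by
  set f := toEuclideanLin A
  have hf : IsIdempotentElem f := by
    rw [IsIdempotentElem]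
    ext1 x
    simp [f, toLpLin_apply, mulVec_mulVec, hA.eq]
  have hn : finrank 𝕂 (LinearMap.range f) = n := by
    rw [← hrank, rank_eq_finrank_range_toLin A (PiLp.basisFun 2 𝕂 _) (PiLp.basisFun 2 𝕂 _)]
    rfl
  obtain ⟨k, rfl⟩ : ∃ k, d = n + k := Nat.exists_eq_add_of_le <|
    hn ▸ (LinearMap.range f).finrank_le.trans_eq finrank_euclideanSpace_fin
  have hk : finrank 𝕂 (LinearMap.ker f) = k := by
    have := LinearMap.finrank_range_add_finrank_ker f
    rw [hn, finrank_euclideanSpace_fin] at this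
    omega
  obtain ⟨v, w, hv, hw, hfv, hfw⟩ := hf.exists_orthonormal_range_ker hn hk
  refine ⟨Fin.append v w, fun j => ?_, fun i j hij => ?_⟩
  · induction j using Fin.addCases with
    | left a => rw [Fin.append_left, if_pos (by simp)]; exact congrArg ofLp (hfv a)
    | right b => rw [Fin.append_right, if_neg (by simp)]; exact congrArg ofLp (hfw b)
  · induction i using Fin.addCases <;> induction j using Fin.addCases <;>
      simp_all [orthonormal_iff_ite.mp hv, orthonormal_iff_ite.mp hw]

theorem exists_isUnit_inv_mul_mul_eq_diagonalIndicator {d n : ℕ} (A : Matrix (Fin d) (Fin d) 𝕂)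
    (hA : IsIdempotentElem A) (hrank : A.rank = n) {M : ℝ} (hAM : ‖A‖ ≤ M)
    (hAM' : ‖1 - A‖ ≤ M) :
    ∃ T : Matrix (Fin d) (Fin d) 𝕂, IsUnit T ∧
      T⁻¹ * A * T = diagonalIndicator (fun i : Fin d => (i : ℕ) < n) ∧
      ‖T‖ ≤ √d ∧ ‖T⁻¹‖ ≤ √d * M := by
  obtain ⟨u, hu⟩ := exists_isAdaptedFrame A hA hrank
  have hinv : (ofCols u)⁻¹ = adaptedFrameInv A _ u := inv_eq_left_inv hu.adaptedFrameInv_mul_ofCols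
  refine ⟨ofCols u, (isUnit_iff_isUnit_det _).mpr
    (isUnit_det_of_left_inverse hu.adaptedFrameInv_mul_ofCols), ?_, ?_, ?_⟩
  · rw [hinv, mul_assoc, hu.mul_ofCols, ← mul_assoc, hu.adaptedFrameInv_mul_ofCols, one_mul]
  · simpa using l2_opNorm_ofCols_le fun i => (hu.norm_eq_one i).le
  · simpa [hinv] using hu.l2_opNorm_adaptedFrameInv_le hAM hAM'

end Matrix

end

theorem stmt_19_general {G 𝕂 : Type*} [RCLike 𝕂] {d n : ℕ}
    (P : G → Matrix (Fin d) (Fin d) 𝕂)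
    (hproj : ∀ g : G, P g * P g = P g)
    (hrank : ∀ g : G, (P g).rank = n)
    (M : ℝ)
    (hbound : ∀ g : G, max ‖P g‖ ‖(1 : Matrix (Fin d) (Fin d) 𝕂) - P g‖ < M) :
    ∃ T : G → Matrix (Fin d) (Fin d) 𝕂,
      (∀ g : G, IsUnit (T g)) ∧
      (∀ g : G, (T g)⁻¹ * P g * T g =
        Matrix.of fun i j : Fin d => if i = j ∧ (i : ℕ) < n then 1 else 0) ∧
      (∀ g : G, ‖T g‖ ≤ d) ∧
      (∀ g : G, ‖(T g)⁻¹‖ ≤ d * M) := by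
  have hP (g : G) : ‖P g‖ ≤ M := ((le_max_left _ _).trans_lt (hbound g)).le
  have hQ (g : G) : ‖1 - P g‖ ≤ M := ((le_max_right _ _).trans_lt (hbound g)).le
  choose T hunit hconj hnorm hnorm_inv using fun g =>
    Matrix.exists_isUnit_inv_mul_mul_eq_diagonalIndicator (P g) (hproj g) (hrank g) (hP g) (hQ g)
  have hsqrt : √(d : ℝ) ≤ d := Real.sqrt_le_self_iff.mpr <| by rcases d with _ | d <;> simp
  exact ⟨T, hunit, fun g => (hconj g).trans (Matrix.diagonalIndicator_eq_of _),
    fun g => (hnorm g).trans hsqrt,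
    fun g => (hnorm_inv g).trans <| mul_le_mul_of_nonneg_right hsqrt ((norm_nonneg _).trans (hP g))⟩

/-- A projector-valued map of constant rank `n` with uniformly bounded projectors and
complements can be uniformly diagonalized: there is `T : G → GL_d(𝕂)` with
`T(g)⁻¹ P(g) T(g) = diag(Id_n, 0)`, `‖T(g)‖ ≤ d` and `‖T(g)⁻¹‖ ≤ d·M`.
Norms are the operator norms induced by the Euclidean norm on `𝕂^d`. -/
theorem stmt_19 {G 𝕂 : Type*} [RCLike 𝕂] {d n : ℕ}
    (P : G → Matrix (Fin d) (Fin d) 𝕂)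
    (hproj : ∀ g : G, P g * P g = P g)
    (hrank : ∀ g : G, (P g).rank = n)
    (M : ℝ) (hM : 1 ≤ M)
    (hbound : ∀ g : G, max ‖P g‖ ‖(1 : Matrix (Fin d) (Fin d) 𝕂) - P g‖ < M) :
    ∃ T : G → Matrix (Fin d) (Fin d) 𝕂,
      (∀ g : G, IsUnit (T g)) ∧
      (∀ g : G, (T g)⁻¹ * P g * T g =
        Matrix.of fun i j : Fin d => if i = j ∧ (i : ℕ) < n then 1 else 0) ∧
      (∀ g : G, ‖T g‖ ≤ d) ∧
      (∀ g : G, ‖(T g)⁻¹‖ ≤ d * M) :=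
  stmt_19_general P hproj hrank M hbound
end
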